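/- Ham-sandwich for finite planar point sets: for any two finite sets A, B ⊆ ℝ², there exists a line ℓ such that each open halfplane bounded by ℓ contains at most |A|/2 points of A and at most |B|/2 points of B. -/

import Mathlib

/-!
Project the points onto the direction `(cos θ, sin θ)`. The `k`-th smallest projection of a finite
set is a min-max of finitely many continuous functions of `θ`, so a suitably symmetrised median
`m_A θ` of the projections of `A` is continuous in `θ`, satisfies `m_A (θ + π) = - m_A θ`, and
leaves at most half of `A` strictly on either side. The intermediate value theorem applied to
`m_A - m_B` on `[0, π]` gives a direction in which both medians coincide, and the line at that
common median bisects both sets.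
-/

open Finset

namespace HamSandwich

variable {α : Type*}

noncomputable def maxOn (f : α → ℝ) (t : Finset α) : ℝ :=
  if h : t.Nonempty then t.sup' h f else 0

/-- The `k`-th smallest value of `f` on `s`, counted from `1`. -/
noncomputable def orderStat (s : Finset α) (k : ℕ) (f : α → ℝ) : ℝ :=
  if h : (s.powersetCard k).Nonempty then (s.powersetCard k).inf' h (maxOn f) else 0

theorem card_filter_lt_orderStat (s : Finset α) {k : ℕ} (hk : 0 < k) (f : α → ℝ) :
    #{p ∈ s | f p < orderStat s k f} < k := by
  by_contra! hcard
  obtain ⟨t, hts, htk⟩ := exists_subset_card_eq hcard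
  have ht : t ∈ s.powersetCard k := mem_powersetCard.2 ⟨hts.trans (filter_subset _ _), htk⟩
  have htne : t.Nonempty := card_pos.1 (htk ▸ hk)
  have hle : orderStat s k f ≤ maxOn f t := by
    rw [orderStat, dif_pos ⟨t, ht⟩]
    exact inf'_le _ ht
  have hlt : maxOn f t < orderStat s k f := by
    rw [maxOn, dif_pos htne]
    exact (sup'_lt_iff htne).2 fun p hp => (mem_filter.1 (hts hp)).2
  exact hle.not_gt hlt

theorem le_card_filter_le_orderStat {s : Finset α} {k : ℕ} (hk : 0 < k) (hks : k ≤ #s)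
    (f : α → ℝ) : k ≤ #{p ∈ s | f p ≤ orderStat s k f} := by
  have hne : (s.powersetCard k).Nonempty := powersetCard_nonempty.2 hks
  obtain ⟨t, ht, hmin⟩ := exists_mem_eq_inf' hne (maxOn f)
  obtain ⟨hts, htk⟩ := mem_powersetCard.1 ht
  have htne : t.Nonempty := card_pos.1 (htk ▸ hk)
  have heq : orderStat s k f = t.sup' htne f := by
    rw [orderStat, dif_pos hne, hmin, maxOn, dif_pos htne]
  calc k = #t := htk.symm
    _ ≤ _ := card_le_card fun p hp => mem_filter.2 ⟨hts hp, heq ▸ le_sup' f hp⟩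

theorem continuous_maxOn (t : Finset α) : Continuous fun f : α → ℝ => maxOn f t := by
  rcases t.eq_empty_or_nonempty with rfl | ht
  · simpa [maxOn] using continuous_const
  · simpa only [maxOn, dif_pos ht] using
      Continuous.finset_sup'_apply ht fun p _ => continuous_apply p

theorem continuous_orderStat (s : Finset α) (k : ℕ) : Continuous (orderStat s k) := by
  unfold orderStat
  by_cases hne : (s.powersetCard k).Nonempty
  · simpa only [dif_pos hne] using Continuous.finset_inf'_apply hne fun t _ => continuous_maxOn t
  · simpa only [dif_neg hne] using continuous_const

/-- The midpoint of the `⌈n/2⌉`-th smallest and the `⌈n/2⌉`-th largest value of `f` on `s`,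
where `n = #s`; writing the latter through `-f` makes `median_neg` hold by definition. -/
noncomputable def median (s : Finset α) (f : α → ℝ) : ℝ :=
  (orderStat s ((#s + 1) / 2) f - orderStat s ((#s + 1) / 2) (-f)) / 2

theorem median_neg (s : Finset α) (f : α → ℝ) : median s (-f) = -median s f := by
  rw [median, median, neg_neg]
  ring

theorem continuous_median (s : Finset α) : Continuous (median s) :=
  ((continuous_orderStat s _).sub ((continuous_orderStat s _).comp continuous_neg)).div_const 2

theorem card_filter_lt_median (s : Finset α) (f : α → ℝ) :
    (#{p ∈ s | f p < median s f} : ℝ) ≤ #s / 2 := by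
  rcases s.eq_empty_or_nonempty with rfl | hs
  · simp
  set k := (#s + 1) / 2 with hk
  have hk0 : 0 < k := by have := hs.card_pos; omega
  set m := median s f
  suffices 2 * #{p ∈ s | f p < m} ≤ #s by
    have : (2 : ℝ) * #{p ∈ s | f p < m} ≤ #s := by exact_mod_cast this
    linarith
  by_cases hlow : m < orderStat s k f
  · have hsub : {p ∈ s | f p < m} ⊆ {p ∈ s | f p < orderStat s k f} :=
      monotone_filter_right _ fun p _ hp => hp.trans hlow
    have := (card_le_card hsub).trans_lt (card_filter_lt_orderStat s hk0 f)
    omega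
  · -- `m` is the midpoint, so `m ≥ orderStat s k f` forces `m ≤ -orderStat s k (-f)`
    have hm : m ≤ -orderStat s k (-f) := by
      simp only [m, median, ← hk] at hlow ⊢
      linarith
    have hsub : {p ∈ s | (-f) p ≤ orderStat s k (-f)} ⊆ {p ∈ s | ¬ f p < m} :=
      monotone_filter_right _ fun p _ hp => by simp only [Pi.neg_apply] at hp; linarith
    have hge := (le_card_filter_le_orderStat hk0 (by omega) (-f)).trans (card_le_card hsub)
    have := card_filter_add_card_filter_not (s := s) (fun p => f p < m)
    omega

theorem card_filter_median_lt (s : Finset α) (f : α → ℝ) :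
    (#{p ∈ s | median s f < f p} : ℝ) ≤ #s / 2 := by
  simpa only [median_neg, Pi.neg_apply, neg_lt_neg_iff] using card_filter_lt_median s (-f)

end HamSandwich

theorem Continuous.exists_eq_zero_of_map_eq_neg {X : Type*} [TopologicalSpace X]
    [PreconnectedSpace X] {g : X → ℝ} (hg : Continuous g) {a b : X} (hab : g b = -g a) :
    ∃ x, g x = 0 := by
  rcases le_total (g a) 0 with ha | ha
  · exact intermediate_value_univ a b hg ⟨ha, by linarith⟩
  · exact intermediate_value_univ b a hg ⟨by linarith, ha⟩

open HamSandwich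

theorem exists_angle_median_eq (A B : Finset (ℝ × ℝ)) :
    ∃ θ : ℝ, median A (fun p => Real.cos θ * p.1 + Real.sin θ * p.2) =
      median B (fun p => Real.cos θ * p.1 + Real.sin θ * p.2) := by
  set proj : ℝ → ℝ × ℝ → ℝ := fun θ p => Real.cos θ * p.1 + Real.sin θ * p.2
  have hproj : Continuous proj := continuous_pi fun p => by fun_prop
  have hpi : proj Real.pi = -proj 0 := by
    funext p
    simp [proj]
  obtain ⟨θ, hθ⟩ := Continuous.exists_eq_zero_of_map_eq_neg (a := 0) (b := Real.pi)
    (((continuous_median A).comp hproj).sub ((continuous_median B).comp hproj))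
    (by simp only [Pi.sub_apply, Function.comp_apply, hpi, median_neg]; ring)
  exact ⟨θ, sub_eq_zero.1 hθ⟩

theorem stmt_15 (A B : Finset (ℝ × ℝ)) :
    ∃ a : ℝ × ℝ, a ≠ 0 ∧ ∃ b : ℝ,
      ((A.filter (fun p => a.1 * p.1 + a.2 * p.2 < b)).card : ℝ) ≤ (A.card : ℝ) / 2 ∧
      ((A.filter (fun p => b < a.1 * p.1 + a.2 * p.2)).card : ℝ) ≤ (A.card : ℝ) / 2 ∧
      ((B.filter (fun p => a.1 * p.1 + a.2 * p.2 < b)).card : ℝ) ≤ (B.card : ℝ) / 2 ∧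
      ((B.filter (fun p => b < a.1 * p.1 + a.2 * p.2)).card : ℝ) ≤ (B.card : ℝ) / 2 := by
  obtain ⟨θ, hθ⟩ := exists_angle_median_eq A B
  have hdir : (Real.cos θ, Real.sin θ) ≠ 0 := fun h => by
    obtain ⟨hcos, hsin⟩ := Prod.mk_eq_zero.1 h
    have := Real.sin_sq_add_cos_sq θ
    rw [hcos, hsin] at this
    norm_num at this
  refine ⟨_, hdir, _, card_filter_lt_median A _, card_filter_median_lt A _, ?_, ?_⟩
  · exact hθ ▸ card_filter_lt_median B _
  · exact hθ ▸ card_filter_median_lt B _
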